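/- arXiv:1106.2623 — 3 statements merged into one kernel-verified Lean document; each statement's English description precedes it below -/
import Mathlib

section
/- Let d ≥ 1 and let H be a subgroup of GL_d(ℂ) acting irreducibly on ℂ^d, i.e., ℂ^d has no H-invariant linear subspace other than {0} and ℂ^d. If every eigenvalue of every element of H has modulus 1, then H is relatively compact in GL_d(ℂ) (equivalently, H is a bounded subset of the d×d complex matrices). -/
/-!
By Burnside's theorem, irreducibility forces the linear span of `H` to be the whole matrix
algebra, so `H` contains a basis `b₁, …, bₙ` of it. The trace form is nondegenerate, so a
matrix `g` depends linearly and injectively on the numbers `tr (g bᵢ)`. For `g ∈ H` each `g bᵢ`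
lies in `H`, so its trace is a sum of `d` eigenvalues of modulus one and is bounded by `d`.
Hence `H` is bounded among matrices, and since `H⁻¹ = H` it lies in a compact subset of
`GL_d(ℂ)`.
-/

def ActsIrreducibly (d : ℕ) (H : Subgroup (GL (Fin d) ℂ)) : Prop :=
  ∀ U : Submodule ℂ (Fin d → ℂ),
    (∀ h : H, Submodule.map
      (Matrix.mulVecLin (((h : GL (Fin d) ℂ) : Matrix (Fin d) (Fin d) ℂ))) U = U) →
    U = ⊥ ∨ U = ⊤

open Module

section Burnside

variable {k V : Type*} [Field k] [IsAlgClosed k] [AddCommGroup V] [Module k V]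
  [FiniteDimensional k V]

/-- Burnside's theorem. By Schur's lemma `End A V = k`, so every `k`-linear map is
`End A V`-linear, and Jacobson density realises it by an element of `A`. -/
theorem IsSimpleModule.lsmul_surjective_of_isAlgClosed {A : Type*} [Ring A] [Algebra k A]
    [Module A V] [IsScalarTower k A V] [IsSimpleModule A V] :
    Function.Surjective (Algebra.lsmul k k V : A →ₐ[k] End k V) := by
  have hschur := (IsSimpleModule.algebraMap_end_bijective_of_isAlgClosed (A := A) (V := V) k).2
  have : Module.Finite (End A V) V := .of_restrictScalars_finite k (End A V) V
  intro f
  let f' : End (End A V) V :=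
    { toFun := f
      map_add' := map_add f
      map_smul' := fun g v => by
        obtain ⟨c, rfl⟩ := hschur g
        simp }
  obtain ⟨a, ha⟩ := Module.Finite.toModuleEnd_moduleEnd_surjective f'
  exact ⟨a, LinearMap.ext fun v => LinearMap.congr_fun ha v⟩

theorem Subalgebra.eq_top_of_forall_invariant (A : Subalgebra k (End k V))
    (hA : ∀ U : Submodule k V, (∀ a ∈ A, U.map a ≤ U) → U = ⊥ ∨ U = ⊤) : A = ⊤ := by
  rcases subsingleton_or_nontrivial V with hV | hV
  · exact Subsingleton.elim _ _
  have : IsSimpleModule A V := by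
    refine { eq_bot_or_eq_top := fun U => ?_ }
    have hU : ∀ a ∈ A, (U.restrictScalars k).map a ≤ U.restrictScalars k := by
      rintro a ha _ ⟨v, hv, rfl⟩
      exact U.smul_mem ⟨a, ha⟩ hv
    simpa [Submodule.restrictScalars_eq_bot_iff, Submodule.restrictScalars_eq_top_iff] using
      hA _ hU
  refine eq_top_iff.mpr fun f _ => ?_
  obtain ⟨a, rfl⟩ := IsSimpleModule.lsmul_surjective_of_isAlgClosed (A := A) f
  convert a.2
  ext v
  rfl

theorem Submonoid.span_eq_top_of_forall_invariant (S : Submonoid (End k V))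
    (hS : ∀ U : Submodule k V, (∀ a ∈ S, U.map a ≤ U) → U = ⊥ ∨ U = ⊤) :
    Submodule.span k (S : Set (End k V)) = ⊤ := by
  have hA : Algebra.adjoin k (S : Set (End k V)) = ⊤ :=
    Subalgebra.eq_top_of_forall_invariant _ fun U hU =>
      hS U fun a ha => hU a (Algebra.subset_adjoin ha)
  rw [← Submonoid.closure_eq S, ← Algebra.adjoin_eq_span, hA, Algebra.top_toSubmodule]

end Burnside

theorem Matrix.span_eq_top_of_forall_invariant {n k : Type*} [Fintype n] [DecidableEq n]
    [Field k] [IsAlgClosed k] (S : Submonoid (Matrix n n k))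
    (hS : ∀ U : Submodule k (n → k), (∀ M ∈ S, U.map M.mulVecLin ≤ U) → U = ⊥ ∨ U = ⊤) :
    Submodule.span k (S : Set (Matrix n n k)) = ⊤ := by
  have := Submonoid.span_eq_top_of_forall_invariant (S.map toLinAlgEquiv') fun U hU =>
    hS U fun M hM => hU _ ⟨M, hM, toLin'_apply' M⟩
  rw [Submonoid.coe_map] at this
  rwa [← Submodule.map_eq_top_iff (e := toLin'), ← Submodule.span_image]

theorem Matrix.GeneralLinearGroup.map_mulVecLin_eq_self {n k : Type*} [Fintype n] [DecidableEq n]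
    [CommRing k] (u : GL n k) {U : Submodule k (n → k)}
    (hu : U.map (u : Matrix n n k).mulVecLin ≤ U)
    (hu' : U.map (↑u⁻¹ : Matrix n n k).mulVecLin ≤ U) :
    U.map (u : Matrix n n k).mulVecLin = U := by
  refine le_antisymm hu fun x hx => ⟨_, hu' ⟨x, hx, rfl⟩, ?_⟩
  simp [Matrix.mulVec_mulVec]

theorem Matrix.norm_trace_le_card_of_forall_hasEigenvalue {n 𝕜 : Type*} [Fintype n]
    [DecidableEq n] [NormedField 𝕜] [IsAlgClosed 𝕜] (N : Matrix n n 𝕜)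
    (hN : ∀ z, End.HasEigenvalue N.mulVecLin z → ‖z‖ ≤ 1) :
    ‖N.trace‖ ≤ Fintype.card n := by
  have hroots : ∀ z ∈ N.charpoly.roots, ‖z‖ ≤ 1 := fun z hz => hN z <| by
    rw [← Matrix.toLin'_apply', End.hasEigenvalue_iff_isRoot_charpoly, Matrix.charpoly_toLin']
    exact Polynomial.isRoot_of_mem_roots hz
  calc ‖N.trace‖ = ‖N.charpoly.roots.sum‖ := by rw [N.trace_eq_sum_roots_charpoly]
    _ ≤ (N.charpoly.roots.map (‖·‖)).sum := norm_multiset_sum_le _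
    _ ≤ (N.charpoly.roots.map (‖·‖)).card • (1 : ℝ) :=
        Multiset.sum_le_card_nsmul _ _ <| Multiset.forall_mem_map_iff.mpr hroots
    _ = Fintype.card n := by
        rw [Multiset.card_map, IsAlgClosed.card_roots_eq_natDegree, N.charpoly_natDegree_eq_dim,
          nsmul_one]

theorem exists_isCompact_superset_of_forall_norm_le {𝕜 E ι : Type*} [NontriviallyNormedField 𝕜]
    [CompleteSpace 𝕜] [ProperSpace 𝕜] [AddCommGroup E] [Module 𝕜 E] [TopologicalSpace E]
    [IsTopologicalAddGroup E] [ContinuousSMul 𝕜 E] [T2Space E] [FiniteDimensional 𝕜 E] [Finite ι]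
    (f : ι → E →ₗ[𝕜] 𝕜) (hf : ∀ x, (∀ i, f i x = 0) → x = 0) {T : Set E} {C : ℝ}
    (hT : ∀ x ∈ T, ∀ i, ‖f i x‖ ≤ C) : ∃ K, IsCompact K ∧ T ⊆ K := by
  have hker : LinearMap.ker (LinearMap.pi f) = ⊥ :=
    LinearMap.ker_eq_bot'.mpr fun x hx => hf x fun i => congr_fun hx i
  refine ⟨LinearMap.pi f ⁻¹' Set.univ.pi fun _ => Metric.closedBall 0 C,
    (LinearMap.isClosedEmbedding_of_injective hker).isCompact_preimage
      (isCompact_univ_pi fun _ => isCompact_closedBall 0 C), fun x hx => ?_⟩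
  simpa using hT x hx

theorem Matrix.exists_isCompact_superset_of_norm_trace_mul_le {n 𝕜 : Type*} [Fintype n]
    [NontriviallyNormedField 𝕜] [CompleteSpace 𝕜] [ProperSpace 𝕜] {S T : Set (Matrix n n 𝕜)}
    (hS : Submodule.span 𝕜 S = ⊤) {C : ℝ} (hT : ∀ M ∈ T, ∀ N ∈ S, ‖(M * N).trace‖ ≤ C) :
    ∃ K, IsCompact K ∧ T ⊆ K := by
  obtain ⟨t, hts, hspan, hli⟩ := exists_linearIndependent 𝕜 S
  have : Finite t := hli.setFinite
  let f : t → Matrix n n 𝕜 →ₗ[𝕜] 𝕜 := fun N => traceLinearMap n 𝕜 𝕜 ∘ₗ LinearMap.mulRight 𝕜 N.1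
  refine exists_isCompact_superset_of_forall_norm_le f (fun M hM => ?_)
    fun M hM N => hT M hM N (hts N.2)
  have : traceLinearMap n 𝕜 𝕜 ∘ₗ LinearMap.mulLeft 𝕜 M = 0 :=
    LinearMap.ext_on (hspan.trans hS) fun N hN => hM ⟨N, hN⟩
  exact ext_iff_trace_mul_right.mpr fun N => by simpa using LinearMap.congr_fun this N

theorem Subgroup.isCompact_closure_of_forall_val_mem {M : Type*} [Monoid M] [TopologicalSpace M]
    [ContinuousMul M] [T2Space M] (H : Subgroup Mˣ) {K : Set M} (hK : IsCompact K)
    (hHK : ∀ u ∈ H, (u : M) ∈ K) : IsCompact (_root_.closure (H : Set Mˣ)) := by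
  have hL : IsCompact (Units.embedProduct M ⁻¹' K ×ˢ (MulOpposite.unop ⁻¹' K)) :=
    Units.isClosedEmbedding_embedProduct.isCompact_preimage
      (hK.prod (MulOpposite.opHomeomorph.symm.isCompact_preimage.mpr hK))
  refine hL.of_isClosed_subset isClosed_closure (closure_minimal (fun u hu => ?_) hL.isClosed)
  exact ⟨hHK u hu, hHK u⁻¹ (H.inv_mem hu)⟩

theorem relatively_compact_of_irreducible_eigenvalues_modulus_one_general
    (d : ℕ) (H : Subgroup (GL (Fin d) ℂ))
    (hirr : ActsIrreducibly d H)
    (heig : ∀ h : H, ∀ z : ℂ,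
      Module.End.HasEigenvalue
        (Matrix.mulVecLin (((h : GL (Fin d) ℂ) : Matrix (Fin d) (Fin d) ℂ))) z →
      ‖z‖ = 1) :
    IsCompact (closure (H : Set (GL (Fin d) ℂ))) := by
  let S : Submonoid (Matrix (Fin d) (Fin d) ℂ) := H.toSubmonoid.map (Units.coeHom _)
  have hspan : Submodule.span ℂ (S : Set (Matrix (Fin d) (Fin d) ℂ)) = ⊤ :=
    Matrix.span_eq_top_of_forall_invariant S fun U hU => hirr U fun h =>
      Matrix.GeneralLinearGroup.map_mulVecLin_eq_self (h : GL (Fin d) ℂ) (hU _ ⟨h, h.2, rfl⟩)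
        (hU _ ⟨_, H.inv_mem h.2, rfl⟩)
  have hbound : ∀ M ∈ S, ∀ N ∈ S, ‖(M * N).trace‖ ≤ d := by
    intro M hM N hN
    obtain ⟨h, hh, hMN⟩ := S.mul_mem hM hN
    simpa [← hMN] using
      Matrix.norm_trace_le_card_of_forall_hasEigenvalue _ fun z hz => (heig ⟨h, hh⟩ z hz).le
  obtain ⟨K, hK, hSK⟩ := Matrix.exists_isCompact_superset_of_norm_trace_mul_le hspan hbound
  exact H.isCompact_closure_of_forall_val_mem hK fun u hu => hSK ⟨u, hu, rfl⟩

/-- Lemma (Bekka–Guivarc'h).  Let `H` be a subgroup of `GL_d(ℂ)` acting irreducibly on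
`ℂ^d`.  If every eigenvalue of every element of `H` has modulus `1`, then `H` is
relatively compact in `GL_d(ℂ)`. -/
theorem relatively_compact_of_irreducible_eigenvalues_modulus_one
    (d : ℕ) (hd : 1 ≤ d) (H : Subgroup (GL (Fin d) ℂ))
    (hirr : ActsIrreducibly d H)
    (heig : ∀ h : H, ∀ z : ℂ,
      Module.End.HasEigenvalue
        (Matrix.mulVecLin (((h : GL (Fin d) ℂ) : Matrix (Fin d) (Fin d) ℂ))) z →
      ‖z‖ = 1) :
    IsCompact (closure (H : Set (GL (Fin d) ℂ))) :=
  relatively_compact_of_irreducible_eigenvalues_modulus_one_general d H hirr heig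
end

section
/- Let d ≥ 1 and let H be a subgroup of GL_d(ℂ) acting irreducibly on ℂ^d, i.e., ℂ^d has no H-invariant linear subspace other than {0} and ℂ^d. If there exists an integer N ≥ 1 such that every eigenvalue of every element of H is an N-th root of unity, then H is finite. -/
noncomputable section

/-!
By Burnside's theorem, an irreducible subgroup `H` of `GL_d(ℂ)` spans the whole matrix algebra,
so it contains a basis `M₁, …, M_{d²}`. Since the trace form `(X, Y) ↦ tr (X Y)` is nondegenerate,
`h ∈ H` is determined by the traces `tr (h Mᵢ)`; each `h Mᵢ` lies in `H`, so its trace is a sum of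
`d` `N`-th roots of unity, and there are only finitely many such sums.
-/

open Module Matrix Polynomial

/-- **Burnside's theorem**. -/
theorem IsSimpleModule.toModuleEnd_surjective_of_isAlgClosed {k A V : Type*} [Field k]
    [IsAlgClosed k] [Ring A] [Algebra k A] [AddCommGroup V] [Module k V] [Module A V]
    [IsScalarTower k A V] [FiniteDimensional k V] [IsSimpleModule A V] :
    Function.Surjective (Module.toModuleEnd k (S := A) V) := by
  -- By Schur, `End A V` consists of scalars, so every `k`-linear map commutes with it and
  -- Jacobson density applies.
  have hschur := IsSimpleModule.algebraMap_end_bijective_of_isAlgClosed k (A := A) (V := V)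
  have : Module.Finite (End A V) V := Module.Finite.of_restrictScalars_finite k (End A V) V
  intro f
  let f' : End (End A V) V :=
    { f with
      map_smul' := fun g v => by
        obtain ⟨c, rfl⟩ := hschur.2 g
        simp }
  obtain ⟨a, ha⟩ := Module.Finite.toModuleEnd_moduleEnd_surjective f'
  exact ⟨a, LinearMap.ext fun v => LinearMap.congr_fun ha v⟩

theorem Submonoid.span_eq_top_of_irreducible {k V : Type*} [Field k] [IsAlgClosed k]
    [AddCommGroup V] [Module k V] [FiniteDimensional k V] (S : Submonoid (End k V))
    (hS : ∀ U : Submodule k V, (∀ f ∈ S, U.map f ≤ U) → U = ⊥ ∨ U = ⊤) :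
    Submodule.span k (S : Set (End k V)) = ⊤ := by
  cases subsingleton_or_nontrivial V
  · exact Subsingleton.elim _ _
  set A := Algebra.adjoin k (S : Set (End k V))
  have : IsSimpleModule A V := by
    refine { exists_pair_ne := ⟨⊥, ⊤, bot_ne_top⟩, eq_bot_or_eq_top := fun U => ?_ }
    have := hS (U.restrictScalars k) fun f hf => by
      rintro _ ⟨v, hv, rfl⟩
      exact U.smul_mem (⟨f, Algebra.subset_adjoin hf⟩ : A) hv
    simpa using this
  have hA : A = ⊤ := by
    refine eq_top_iff.2 fun f _ => ?_
    obtain ⟨a, rfl⟩ := IsSimpleModule.toModuleEnd_surjective_of_isAlgClosed (k := k) (A := A) f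
    exact a.2
  rw [← Submonoid.closure_eq S, ← Algebra.adjoin_eq_span]
  change Subalgebra.toSubmodule A = ⊤
  rw [hA, Algebra.top_toSubmodule]

theorem Matrix.span_submonoid_eq_top_of_irreducible {k n : Type*} [Field k] [IsAlgClosed k]
    [Fintype n] [DecidableEq n] (S : Submonoid (Matrix n n k))
    (hS : ∀ U : Submodule k (n → k), (∀ M ∈ S, U.map M.mulVecLin ≤ U) → U = ⊥ ∨ U = ⊤) :
    Submodule.span k (S : Set (Matrix n n k)) = ⊤ := by
  have hspan := Submonoid.span_eq_top_of_irreducible (S.map (toLinAlgEquiv' (R := k) (n := n)))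
    fun U hU => hS U fun M hM => hU _ ⟨M, hM, rfl⟩
  have hmap : (Submodule.span k (S : Set (Matrix n n k))).map
      (toLin' : Matrix n n k ≃ₗ[k] _).toLinearMap = ⊤ := by
    rw [Submodule.map_span]
    exact hspan
  exact Submodule.map_injective_of_injective toLin'.injective
    (by rw [hmap, Submodule.map_top, LinearEquiv.range])

theorem Matrix.eq_of_forall_trace_mul_eq {n R : Type*} [Fintype n] [DecidableEq n] [Semiring R]
    {X Y : Matrix n n R} (h : ∀ Z, trace (X * Z) = trace (Y * Z)) : X = Y := by
  ext i j
  simpa [trace_mul_single] using h (single j i 1)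

theorem Matrix.finite_submonoid_of_span_eq_top {k n : Type*} [Field k] [Fintype n]
    [DecidableEq n] (S : Submonoid (Matrix n n k))
    (hspan : Submodule.span k (S : Set (Matrix n n k)) = ⊤)
    (htrace : (trace '' (S : Set (Matrix n n k))).Finite) : (S : Set (Matrix n n k)).Finite := by
  obtain ⟨t, htS, htspan⟩ := (Submodule.fg_span_iff_fg_span_finset_subset _).1
    (hspan ▸ Module.Finite.fg_top)
  rw [hspan] at htspan
  let traces : Matrix n n k → t → k := fun X M => trace (X * M.1)
  have hinj : Function.Injective traces := by
    intro X Y hXY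
    refine eq_of_forall_trace_mul_eq fun Z => ?_
    have := LinearMap.ext_on htspan.symm (f := traceLinearMap n k k ∘ₗ LinearMap.mulLeft k X)
      (g := traceLinearMap n k k ∘ₗ LinearMap.mulLeft k Y) fun M hM => congrFun hXY ⟨M, hM⟩
    exact LinearMap.congr_fun this Z
  refine ((Set.Finite.pi' fun _ : t => htrace).preimage hinj.injOn).subset fun X hX M => ?_
  exact ⟨X * M.1, S.mul_mem hX (htS M.2), rfl⟩

theorem Matrix.finite_trace_image_setOf_roots_charpoly_pow_eq_one {K n : Type*} [Field K]
    [IsAlgClosed K] [Fintype n] [DecidableEq n] {N : ℕ} (hN : 0 < N) :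
    (trace '' {X : Matrix n n K | ∀ z, X.charpoly.IsRoot z → z ^ N = 1}).Finite := by
  classical
  refine (Set.finite_range fun s : Sym (nthRootsFinset N (1 : K)) (Fintype.card n) =>
    (s.1.map (↑)).sum).subset ?_
  rintro _ ⟨X, hX, rfl⟩
  have hroots : ∀ z ∈ X.charpoly.roots, z ∈ nthRootsFinset N (1 : K) := fun z hz =>
    (mem_nthRootsFinset hN 1).2 (hX z (mem_roots'.1 hz).2)
  refine ⟨⟨X.charpoly.roots.pmap Subtype.mk hroots, ?_⟩, ?_⟩
  · rw [Multiset.card_pmap, IsAlgClosed.card_roots_eq_natDegree, charpoly_natDegree_eq_dim]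
  · simp [Multiset.map_pmap, Multiset.pmap_eq_map, trace_eq_sum_roots_charpoly]

theorem ActsIrreducibly.eq_bot_or_eq_top_of_map_le {d : ℕ} {H : Subgroup (GL (Fin d) ℂ)}
    (hirr : ActsIrreducibly d H) (U : Submodule ℂ (Fin d → ℂ))
    (hU : ∀ g ∈ H, U.map (mulVecLin (g : Matrix (Fin d) (Fin d) ℂ)) ≤ U) : U = ⊥ ∨ U = ⊤ := by
  refine hirr U fun ⟨g, hg⟩ => le_antisymm (hU g hg) ?_
  calc U = (U.map (mulVecLin (g⁻¹ : GL (Fin d) ℂ).val)).map (mulVecLin g.val) := by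
        rw [← Submodule.map_comp, ← mulVecLin_mul, ← Units.val_mul, mul_inv_cancel, Units.val_one,
          mulVecLin_one, Submodule.map_id]
    _ ≤ U.map (mulVecLin g.val) := Submodule.map_mono (hU _ (H.inv_mem hg))

theorem finite_of_irreducible_eigenvalues_roots_of_unity_general
    (d : ℕ) (H : Subgroup (GL (Fin d) ℂ))
    (hirr : ActsIrreducibly d H)
    (N : ℕ) (hN : 1 ≤ N)
    (heig : ∀ h : H, ∀ z : ℂ,
      Module.End.HasEigenvalue
        (Matrix.mulVecLin (((h : GL (Fin d) ℂ) : Matrix (Fin d) (Fin d) ℂ))) z →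
      z ^ N = 1) :
    (H : Set (GL (Fin d) ℂ)).Finite := by
  let S : Submonoid (Matrix (Fin d) (Fin d) ℂ) := H.toSubmonoid.map (Units.coeHom _)
  have hspan : Submodule.span ℂ (S : Set (Matrix (Fin d) (Fin d) ℂ)) = ⊤ :=
    span_submonoid_eq_top_of_irreducible S fun U hU =>
      hirr.eq_bot_or_eq_top_of_map_le U fun g hg => hU _ ⟨g, hg, rfl⟩
  have htrace : (trace '' (S : Set (Matrix (Fin d) (Fin d) ℂ))).Finite := by
    refine (finite_trace_image_setOf_roots_charpoly_pow_eq_one hN).subset (Set.image_mono ?_)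
    rintro _ ⟨g, hg, rfl⟩ z hz
    refine heig ⟨g, hg⟩ z ?_
    rwa [← toLin'_apply', Module.End.hasEigenvalue_iff_isRoot_charpoly, charpoly_toLin']
  exact (finite_submonoid_of_span_eq_top S hspan htrace).of_finite_image
    Units.val_injective.injOn

/-- Lemma (Bekka–Guivarc'h).  Let `H` be a subgroup of `GL_d(ℂ)` acting irreducibly on
`ℂ^d`.  If there is an integer `N ≥ 1` such that every eigenvalue of every element of `H`
is an `N`-th root of unity, then `H` is finite. -/
theorem finite_of_irreducible_eigenvalues_roots_of_unity
    (d : ℕ) (hd : 1 ≤ d) (H : Subgroup (GL (Fin d) ℂ))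
    (hirr : ActsIrreducibly d H)
    (N : ℕ) (hN : 1 ≤ N)
    (heig : ∀ h : H, ∀ z : ℂ,
      Module.End.HasEigenvalue
        (Matrix.mulVecLin (((h : GL (Fin d) ℂ) : Matrix (Fin d) (Fin d) ℂ))) z →
      z ^ N = 1) :
    (H : Set (GL (Fin d) ℂ)).Finite :=
  finite_of_irreducible_eigenvalues_roots_of_unity_general d H hirr N hN heig

end
end

section
/- Let d ≥ 1 and let Γ be a subgroup of GL_d(ℤ) such that every complex eigenvalue of every element of Γ has modulus 1. Then Γ contains a unique maximal unipotent subgroup of finite index Γ⁰; that is, there exists a subgroup Γ⁰ of finite index in Γ all of whose elements are unipotent, such that every finite-index subgroup of Γ all of whose elements are unipotent is contained in Γ⁰. In particular, Γ⁰ is normal in Γ (indeed characteristic). -/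
/-!
Reduction modulo 3 cuts out a finite-index subgroup `Γ ∩ N` of `Γ`. An element `1 + 3B` of it has
eigenvalues of modulus one, so the eigenvalues of the integer matrix `B` have modulus at most
`2/3`; by Kronecker's theorem (a monic integer polynomial of Mahler measure one has only roots of
unity and zero as roots) they all vanish, and `Γ ∩ N` is unipotent.

Let `J` be the `ℚ`-span of `{n - 1 | n ∈ Γ ∩ N}`: it is closed under multiplication and consists
of trace-zero matrices. A unipotent `g ∈ Γ` has a power `g ^ k ∈ N` with `k ≠ 0`, and `g - 1` is a
polynomial without constant term in `g ^ k - 1`, so `g - 1 ∈ J`. For unipotent `g, h ∈ Γ` this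
gives `gh - 1 ∈ J`, hence `tr (gh) = d`; the eigenvalues of `gh` have modulus one and sum to `d`,
so they all equal one and `gh` is unipotent. Thus the unipotent elements of `Γ` form a subgroup;
it contains `Γ ∩ N`, is normal, and is the required `Γ⁰`.
-/

noncomputable section

/-- An element `g` of `GL_d(ℤ)` is unipotent if `g - 1` is nilpotent. -/
def IsUnipotent {d : ℕ} (g : GL (Fin d) ℤ) : Prop :=
  IsNilpotent (((g : GL (Fin d) ℤ) : Matrix (Fin d) (Fin d) ℤ) - 1)

open Polynomial Matrix

theorem Polynomial.eq_zero_of_isRoot_map_of_forall_norm_lt_one {p : ℤ[X]} (hp : p.Monic)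
    (h : ∀ z : ℂ, (p.map (Int.castRingHom ℂ)).IsRoot z → ‖z‖ < 1) {z : ℂ}
    (hz : (p.map (Int.castRingHom ℂ)).IsRoot z) : z = 0 := by
  by_contra hz0
  have hM : (p.map (Int.castRingHom ℂ)).mahlerMeasure = 1 := by
    rw [mahlerMeasure_eq_leadingCoeff_mul_prod_roots, (hp.map _).leadingCoeff, norm_one, one_mul]
    refine Multiset.prod_eq_one fun x hx ↦ ?_
    obtain ⟨w, hw, rfl⟩ := Multiset.mem_map.1 hx
    exact max_eq_left (h w (isRoot_of_mem_roots hw)).le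
  obtain ⟨k, hk, hzk⟩ := pow_eq_one_of_mahlerMeasure_eq_one hM hz0 <|
    (mem_roots_map_of_injective (Int.castRingHom ℂ).injective_int hp.ne_zero).2 <| by
      rwa [eval₂_eq_eval_map]
  have : ‖z‖ ^ k = 1 := by rw [← norm_pow, hzk, norm_one]
  exact (pow_lt_one₀ (norm_nonneg _) (h z hz) hk.ne').ne this

theorem Multiset.forall_eq_one_of_norm_le_one_of_sum_eq_card {s : Multiset ℂ}
    (h : ∀ z ∈ s, ‖z‖ ≤ 1) (hs : s.sum = card s) : ∀ z ∈ s, z = 1 := by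
  intro z hz
  obtain ⟨t, rfl⟩ := exists_cons_of_mem hz
  have ht : ‖t.sum‖ ≤ card t := by
    calc ‖t.sum‖ ≤ (t.map norm).sum := norm_multiset_sum_le t
      _ ≤ card (t.map norm) • (1 : ℝ) :=
        sum_le_card_nsmul _ _ fun x hx ↦ by
          obtain ⟨w, hw, rfl⟩ := mem_map.1 hx
          exact h w (mem_cons_of_mem hw)
      _ = card t := by simp
  have hre : 1 ≤ z.re := by
    have := congrArg Complex.re hs
    simp only [sum_cons, card_cons, Complex.add_re, Nat.cast_add, Nat.cast_one,
      Complex.natCast_re, Complex.one_re] at this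
    linarith [Complex.re_le_norm t.sum]
  have hz1 : ‖z‖ ≤ 1 := h z (mem_cons_self z t)
  have hnorm : z.re ^ 2 + z.im ^ 2 = ‖z‖ ^ 2 := by
    rw [Complex.sq_norm, Complex.normSq_apply]; ring
  apply Complex.ext <;> simp <;> nlinarith [norm_nonneg z, Complex.re_le_norm z]

namespace Matrix

variable {n : Type*} [Fintype n] [DecidableEq n]

theorem isNilpotent_of_forall_isRoot_charpoly_map {R K : Type*} [CommRing R] [Field K]
    [IsAlgClosed K] {f : R →+* K} (hf : Function.Injective f) {A : Matrix n n R}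
    (h : ∀ z, (A.charpoly.map f).IsRoot z → z = 0) : IsNilpotent A := by
  have hsplits : (A.charpoly.map f).Splits := IsAlgClosed.splits _
  have hroots : (A.charpoly.map f).roots = Multiset.replicate (Fintype.card n) 0 := by
    have := f.domain_nontrivial
    refine Multiset.eq_replicate.2 ⟨?_, fun z hz ↦ h z (isRoot_of_mem_roots hz)⟩
    rw [← hsplits.natDegree_eq_card_roots, A.charpoly_monic.natDegree_map,
      charpoly_natDegree_eq_dim]
  have hX : A.charpoly = X ^ Fintype.card n := by
    apply Polynomial.map_injective f hf
    rw [hsplits.eq_prod_roots_of_monic (A.charpoly_monic.map f), hroots]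
    simp
  exact ⟨Fintype.card n, by simpa [hX] using aeval_self_charpoly A⟩

theorem isRoot_charpoly_map_one_add_smul {R K : Type*} [CommRing R] [Field K] (f : R →+* K)
    (B : Matrix n n R) (m : R) {w : K} (hw : (B.charpoly.map f).IsRoot w) :
    ((1 + m • B).charpoly.map f).IsRoot (1 + f m * w) := by
  rw [IsRoot, ← charpoly_map, eval_charpoly] at hw ⊢
  have : scalar n (1 + f m * w) - (1 + m • B).map f = f m • (scalar n w - B.map f) := by
    ext i j
    rcases eq_or_ne i j with rfl | hij
    · simp; ring
    · simp [hij]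
  rw [this, det_smul, hw, mul_zero]

theorem isNilpotent_of_norm_isRoot_charpoly_one_add_smul_le_one {B : Matrix n n ℤ} {m : ℤ}
    (hm : 3 ≤ m)
    (h : ∀ z : ℂ, ((1 + m • B).charpoly.map (Int.castRingHom ℂ)).IsRoot z → ‖z‖ ≤ 1) :
    IsNilpotent B := by
  refine isNilpotent_of_forall_isRoot_charpoly_map (Int.castRingHom ℂ).injective_int
    fun z hz ↦ eq_zero_of_isRoot_map_of_forall_norm_lt_one B.charpoly_monic (fun w hw ↦ ?_) hz
  have hroot := h _ (isRoot_charpoly_map_one_add_smul _ B m hw)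
  have hm' : (3 : ℝ) ≤ ‖((m : ℤ) : ℂ)‖ := by
    rw [Complex.norm_intCast]; exact_mod_cast hm.trans (le_abs_self m)
  have : ‖(m : ℂ) * w‖ ≤ 2 := calc
    ‖(m : ℂ) * w‖ = ‖(1 + (m : ℂ) * w) - 1‖ := by ring_nf
    _ ≤ ‖1 + (m : ℂ) * w‖ + ‖(1 : ℂ)‖ := norm_sub_le _ _
    _ ≤ 2 := by simp at hroot ⊢; linarith
  rw [norm_mul] at this
  nlinarith [norm_nonneg w]

theorem isNilpotent_sub_one_of_trace_eq_card {A : Matrix n n ℤ}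
    (h : ∀ z : ℂ, (A.charpoly.map (Int.castRingHom ℂ)).IsRoot z → ‖z‖ ≤ 1)
    (htr : A.trace = Fintype.card n) : IsNilpotent (A - 1) := by
  set f := Int.castRingHom ℂ
  have hone : ∀ z ∈ (A.map f).charpoly.roots, z = 1 := by
    refine Multiset.forall_eq_one_of_norm_le_one_of_sum_eq_card
      (fun z hz ↦ h z (by rw [← charpoly_map]; exact isRoot_of_mem_roots hz)) ?_
    rw [← trace_eq_sum_roots_charpoly, ← (IsAlgClosed.splits _).natDegree_eq_card_roots,
      charpoly_natDegree_eq_dim, ← AddMonoidHom.map_trace f, htr]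
    simp
  refine isNilpotent_of_forall_isRoot_charpoly_map f.injective_int fun z hz ↦ ?_
  rw [show A - 1 = A - scalar n 1 by simp, charpoly_sub_scalar, Polynomial.map_comp, IsRoot,
    eval_comp] at hz
  have := hone _ ((mem_roots (A.map f).charpoly_monic.ne_zero).2
    (by simpa [charpoly_map] using hz))
  simpa using this

end Matrix

/- Writing `b = (1 + a) ^ k - 1 = a * Q(a)` with `Q(0) = k`, we get
`b ^ i = k ^ i • a ^ i + a ^ (i + 1) * S(a)`, so `a ^ i ∈ J` follows from `a ^ (i + 1), … ∈ J`:
descending induction from `a ^ m = 0`. -/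
theorem NonUnitalSubalgebra.mem_of_one_add_pow_sub_one_mem {K A : Type*} [Field K] [CharZero K]
    [Ring A] [Algebra K A] (J : NonUnitalSubalgebra K A) {a : A} (ha : IsNilpotent a) {k : ℕ}
    (hk : k ≠ 0) (h : (1 + a) ^ k - 1 ∈ J) : a ∈ J := by
  obtain ⟨m, hm⟩ := ha
  set b := (1 + a) ^ k - 1
  have hb : ∀ i, b ^ (i + 1) ∈ J := fun i ↦ by
    induction i with
    | zero => simpa using h
    | succ i ih => rw [pow_succ]; exact J.mul_mem ih h
  set Q : K[X] := ∑ j ∈ Finset.range k, (1 + X) ^ j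
  have hQ : aeval a (X * Q) = b := by simp [b, Q, ← mul_geom_sum]
  have hQ0 : Q.eval 0 = k := by simp [Q, eval_finsetSum]
  suffices ∀ j i, m ≤ i + 1 + j → a ^ (i + 1) ∈ J by simpa using this m 0 (by omega)
  intro j
  induction j with
  | zero => intro i hi; rw [pow_eq_zero_of_le hi hm]; exact zero_mem J
  | succ j ih =>
    intro i hi
    obtain ⟨S, hS⟩ : X ∣ Q ^ (i + 1) - C ((k : K) ^ (i + 1)) := by
      rw [X_dvd_iff, coeff_zero_eq_eval_zero]; simp [hQ0]
    have hexp : (X * Q) ^ (i + 1) = C ((k : K) ^ (i + 1)) * X ^ (i + 1) + X ^ (i + 2) * S := by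
      rw [mul_pow, sub_eq_iff_eq_add'.1 hS]; ring
    have hhigher : aeval a (X ^ (i + 2) * S) ∈ J := by
      rw [_root_.map_mul, aeval_eq_sum_range (p := S), Finset.mul_sum]
      refine sum_mem fun l _ ↦ ?_
      rw [map_pow, aeval_X, mul_smul_comm, ← pow_add, add_right_comm]
      exact J.smul_mem _ (ih _ (by omega))
    have hai :
        a ^ (i + 1) = ((k : K) ^ (i + 1))⁻¹ • (b ^ (i + 1) - aeval a (X ^ (i + 2) * S)) := by
      rw [← hQ, ← map_pow, hexp, map_add, add_sub_cancel_right, _root_.map_mul, aeval_C,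
        aeval_X_pow, ← Algebra.smul_def, smul_smul, inv_mul_cancel₀ (by simpa using hk),
        one_smul]
    rw [hai]
    exact J.smul_mem _ (sub_mem (hb i) hhigher)

section Augmentation

variable (R : Type*) {A G : Type*} [CommRing R] [Ring A] [Algebra R A] [Monoid G]
  (ρ : G →* A) (N : Submonoid G)

theorem MonoidHom.map_mul_sub_one (g h : G) :
    ρ (g * h) - 1 = (ρ g - 1) * (ρ h - 1) + (ρ g - 1) + (ρ h - 1) := by
  rw [map_mul]; noncomm_ring

theorem span_sub_one_mul_le :
    Submodule.span R ((fun g ↦ ρ g - 1) '' N) * Submodule.span R ((fun g ↦ ρ g - 1) '' N) ≤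
      Submodule.span R ((fun g ↦ ρ g - 1) '' N) := by
  rw [Submodule.span_mul_span, Submodule.span_le]
  rintro _ ⟨_, ⟨g, hg, rfl⟩, _, ⟨h, hh, rfl⟩, rfl⟩
  dsimp only
  rw [show (ρ g - 1) * (ρ h - 1) = (ρ (g * h) - 1) - (ρ g - 1) - (ρ h - 1) by
    rw [ρ.map_mul_sub_one]; abel]
  exact sub_mem (sub_mem (Submodule.subset_span ⟨_, mul_mem hg hh, rfl⟩)
    (Submodule.subset_span ⟨g, hg, rfl⟩)) (Submodule.subset_span ⟨h, hh, rfl⟩)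

/-- The image under `ρ` of the augmentation ideal of the monoid algebra `R[N]`. -/
def augmentationSubalgebra : NonUnitalSubalgebra R A :=
  (Submodule.span R ((fun g ↦ ρ g - 1) '' N)).toNonUnitalSubalgebra fun _ _ hx hy ↦
    span_sub_one_mul_le R ρ N (Submodule.mul_mem_mul hx hy)

variable {R ρ N}

theorem sub_one_mem_augmentationSubalgebra {g : G} (hg : g ∈ N) :
    ρ g - 1 ∈ augmentationSubalgebra R ρ N :=
  Submodule.subset_span ⟨g, hg, rfl⟩

theorem map_mul_sub_one_mem_augmentationSubalgebra {g h : G}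
    (hg : ρ g - 1 ∈ augmentationSubalgebra R ρ N)
    (hh : ρ h - 1 ∈ augmentationSubalgebra R ρ N) :
    ρ (g * h) - 1 ∈ augmentationSubalgebra R ρ N := by
  rw [ρ.map_mul_sub_one]
  exact add_mem (add_mem (mul_mem hg hh) hg) hh

theorem map_eq_zero_of_mem_augmentationSubalgebra {M : Type*} [AddCommGroup M] [Module R M]
    (φ : A →ₗ[R] M) (hφ : ∀ g ∈ N, φ (ρ g - 1) = 0) {x : A}
    (hx : x ∈ augmentationSubalgebra R ρ N) : φ x = 0 :=
  Submodule.span_le (p := LinearMap.ker φ).2 (by rintro _ ⟨g, hg, rfl⟩; exact hφ g hg) hx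

theorem sub_one_mem_augmentationSubalgebra_of_pow_mem {K : Type*} [Field K] [CharZero K]
    [Algebra K A] {g : G} (hg : IsNilpotent (ρ g - 1)) {k : ℕ} (hk : k ≠ 0)
    (hgk : g ^ k ∈ N) : ρ g - 1 ∈ augmentationSubalgebra K ρ N := by
  refine (augmentationSubalgebra K ρ N).mem_of_one_add_pow_sub_one_mem hg hk ?_
  simpa [map_pow] using sub_one_mem_augmentationSubalgebra (R := K) (ρ := ρ) hgk

end Augmentation

def intToRatMatrix (n : Type*) [Fintype n] [DecidableEq n] : GL n ℤ →* Matrix n n ℚ :=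
  (Int.castRingHom ℚ).mapMatrix.toMonoidHom.comp (Units.coeHom _)

theorem intToRatMatrix_sub_one {n : Type*} [Fintype n] [DecidableEq n] (g : GL n ℤ) :
    intToRatMatrix n g - 1 = (Int.castRingHom ℚ).mapMatrix (g.val - 1) := by
  rw [map_sub, map_one]; rfl

variable {d : ℕ}

theorem isUnipotent_one : IsUnipotent (1 : GL (Fin d) ℤ) := by
  simp [IsUnipotent]

namespace IsUnipotent

variable {g : GL (Fin d) ℤ}

theorem inv (hg : IsUnipotent g) : IsUnipotent g⁻¹ := by
  have : g⁻¹.val - 1 = -(g⁻¹.val * (g.val - 1)) := by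
    rw [mul_sub, Units.inv_mul, mul_one, neg_sub]
  have hcomm : Commute g⁻¹.val (g.val - 1) :=
    (Commute.refl _).units_inv_left.sub_right (Commute.one_right _)
  rw [IsUnipotent, this]
  exact (hcomm.isNilpotent_mul_left hg).neg

theorem conj (hg : IsUnipotent g) (h : GL (Fin d) ℤ) : IsUnipotent (h * g * h⁻¹) := by
  obtain ⟨k, hk⟩ := hg
  refine ⟨k, ?_⟩
  have : (h * g * h⁻¹).val - 1 = h.val * (g.val - 1) * h⁻¹.val := by
    simp [mul_sub, sub_mul]
  rw [this, Units.conj_pow, hk, mul_zero, zero_mul]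

theorem isNilpotent_intToRatMatrix_sub_one (hg : IsUnipotent g) :
    IsNilpotent (intToRatMatrix (Fin d) g - 1) := by
  rw [intToRatMatrix_sub_one]
  exact hg.map _

end IsUnipotent

theorem isUnipotent_of_map_zmod_eq_one {m : ℕ} (hm : 3 ≤ m) {g : GL (Fin d) ℤ}
    (hg : GeneralLinearGroup.map (Int.castRingHom (ZMod m)) g = 1)
    (h : ∀ z : ℂ, (g.val.charpoly.map (Int.castRingHom ℂ)).IsRoot z → ‖z‖ ≤ 1) :
    IsUnipotent g := by
  have hg' : (Int.castRingHom (ZMod m)).mapMatrix (g.val - 1) = 0 := by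
    rw [map_sub, map_one, sub_eq_zero]
    exact congr_arg Units.val hg
  have hdvd : ∀ i j, (m : ℤ) ∣ (g.val - 1) i j := fun i j ↦
    (ZMod.intCast_zmod_eq_zero_iff_dvd _ _).1 (by simpa using congrArg (· i j) hg')
  choose B hB using hdvd
  have hgB : g.val = 1 + (m : ℤ) • Matrix.of B := by
    ext i j
    simp only [Matrix.add_apply, Matrix.smul_apply, of_apply, smul_eq_mul, ← hB,
      Matrix.sub_apply]
    ring
  have hB : IsNilpotent (Matrix.of B) :=
    isNilpotent_of_norm_isRoot_charpoly_one_add_smul_le_one (m := m) (by exact_mod_cast hm)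
      (hgB ▸ h)
  rw [IsUnipotent, hgB, add_sub_cancel_left]
  exact hB.smul _

theorem isUnipotent_of_intToRatMatrix_sub_one_mem {N : Submonoid (GL (Fin d) ℤ)}
    (hN : ∀ n ∈ N, IsUnipotent n) {g : GL (Fin d) ℤ}
    (h : ∀ z : ℂ, (g.val.charpoly.map (Int.castRingHom ℂ)).IsRoot z → ‖z‖ ≤ 1)
    (hg : intToRatMatrix (Fin d) g - 1 ∈ augmentationSubalgebra ℚ (intToRatMatrix (Fin d)) N) :
    IsUnipotent g := by
  have htr := map_eq_zero_of_mem_augmentationSubalgebra (traceLinearMap _ ℚ ℚ)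
    (fun n hn ↦ (isNilpotent_trace_of_isNilpotent
      (hN n hn).isNilpotent_intToRatMatrix_sub_one).eq_zero) hg
  rw [traceLinearMap_apply, intToRatMatrix_sub_one, RingHom.mapMatrix_apply,
    ← AddMonoidHom.map_trace, map_eq_zero_iff _ (Int.castRingHom ℚ).injective_int, trace_sub,
    trace_one, sub_eq_zero] at htr
  exact isNilpotent_sub_one_of_trace_eq_card h htr

theorem exists_maximal_unipotent_finite_index_subgroup_general
    (d : ℕ) (Γ : Subgroup (GL (Fin d) ℤ))
    (heig : ∀ γ ∈ Γ, ∀ z : ℂ,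
      (((( γ : GL (Fin d) ℤ) : Matrix (Fin d) (Fin d) ℤ).charpoly).map
        (Int.castRingHom ℂ)).IsRoot z → ‖z‖ = 1) :
    ∃ Γ0 : Subgroup (GL (Fin d) ℤ), Γ0 ≤ Γ ∧
      (Γ0.subgroupOf Γ).index ≠ 0 ∧
      (∀ g ∈ Γ0, IsUnipotent g) ∧
      (∀ Γ1 : Subgroup (GL (Fin d) ℤ), Γ1 ≤ Γ → (Γ1.subgroupOf Γ).index ≠ 0 →
        (∀ g ∈ Γ1, IsUnipotent g) → Γ1 ≤ Γ0) ∧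
      (Γ0.subgroupOf Γ).Normal := by
  have heig' : ∀ γ ∈ Γ, ∀ z : ℂ, (γ.val.charpoly.map (Int.castRingHom ℂ)).IsRoot z → ‖z‖ ≤ 1 :=
    fun γ hγ z hz ↦ (heig γ hγ z hz).le
  set N := (GeneralLinearGroup.map (Int.castRingHom (ZMod 3)) (n := Fin d)).ker
  have hNfin : N.FiniteIndex := Subgroup.finiteIndex_ker _
  have hN : ∀ g ∈ Γ ⊓ N, IsUnipotent g := fun g hg ↦
    isUnipotent_of_map_zmod_eq_one le_rfl hg.2 (heig' g hg.1)
  have hJ : ∀ g ∈ Γ, IsUnipotent g → intToRatMatrix (Fin d) g - 1 ∈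
      augmentationSubalgebra ℚ (intToRatMatrix (Fin d)) (Γ ⊓ N).toSubmonoid := fun g hg hgu ↦
    sub_one_mem_augmentationSubalgebra_of_pow_mem hgu.isNilpotent_intToRatMatrix_sub_one
      Subgroup.FiniteIndex.index_ne_zero ⟨pow_mem hg _, N.pow_index_mem g⟩
  let Γ0 : Subgroup (GL (Fin d) ℤ) :=
    { carrier := {g | g ∈ Γ ∧ IsUnipotent g}
      one_mem' := ⟨Γ.one_mem, isUnipotent_one⟩
      mul_mem' := fun ⟨hg, hgu⟩ ⟨hh, hhu⟩ ↦ ⟨mul_mem hg hh,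
        isUnipotent_of_intToRatMatrix_sub_one_mem hN (heig' _ (mul_mem hg hh))
          (map_mul_sub_one_mem_augmentationSubalgebra (hJ _ hg hgu) (hJ _ hh hhu))⟩
      inv_mem' := fun ⟨hg, hgu⟩ ↦ ⟨inv_mem hg, hgu.inv⟩ }
  refine ⟨Γ0, fun g hg ↦ hg.1, ?_, fun g hg ↦ hg.2,
    fun Γ1 hΓ1 _ hu g hg ↦ ⟨hΓ1 hg, hu g hg⟩, ⟨fun g hg γ ↦ ⟨(γ * g * γ⁻¹).2, hg.2.conj γ⟩⟩⟩
  have hle : N.subgroupOf Γ ≤ Γ0.subgroupOf Γ := fun x hx ↦ ⟨x.2, hN x ⟨x.2, hx⟩⟩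
  exact (Subgroup.finiteIndex_of_le hle).index_ne_zero

/-- Corollary (Bekka–Guivarc'h).  Let `Γ` be a subgroup of `GL_d(ℤ)` such that every
complex eigenvalue of every element of `Γ` has modulus `1`.  Then `Γ` contains a unique
maximal unipotent subgroup of finite index `Γ⁰`: a finite-index subgroup all of whose
elements are unipotent, containing every finite-index subgroup of `Γ` all of whose
elements are unipotent.  In particular, `Γ⁰` is normal in `Γ`. -/
theorem exists_maximal_unipotent_finite_index_subgroup
    (d : ℕ) (hd : 1 ≤ d) (Γ : Subgroup (GL (Fin d) ℤ))
    (heig : ∀ γ ∈ Γ, ∀ z : ℂ,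
      (((( γ : GL (Fin d) ℤ) : Matrix (Fin d) (Fin d) ℤ).charpoly).map
        (Int.castRingHom ℂ)).IsRoot z → ‖z‖ = 1) :
    ∃ Γ0 : Subgroup (GL (Fin d) ℤ), Γ0 ≤ Γ ∧
      (Γ0.subgroupOf Γ).index ≠ 0 ∧
      (∀ g ∈ Γ0, IsUnipotent g) ∧
      (∀ Γ1 : Subgroup (GL (Fin d) ℤ), Γ1 ≤ Γ → (Γ1.subgroupOf Γ).index ≠ 0 →
        (∀ g ∈ Γ1, IsUnipotent g) → Γ1 ≤ Γ0) ∧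
      (Γ0.subgroupOf Γ).Normal :=
  exists_maximal_unipotent_finite_index_subgroup_general d Γ heig

end
end
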